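/- arXiv:2603.26621 — 2 statements merged into one kernel-verified Lean document; each statement's English description precedes it below -/
import Mathlib

section
/- Let P₁ = {c₁ + G₁λ : ‖λ‖_∞ ≤ 1, F₁λ = θ₁} and P₂ = {c₂ + G₂λ : ‖λ‖_∞ ≤ 1, F₂λ = θ₂} be constrained zonotopes in ℝ^d with G₁ ∈ ℝ^{d×n₁}, G₂ ∈ ℝ^{d×n₂}, F₁ ∈ ℝ^{p₁×n₁}, F₂ ∈ ℝ^{p₂×n₂}. Suppose there exist γ ∈ ℝ^{n₂}, Γ ∈ ℝ^{n₂×n₁}, and Π ∈ ℝ^{p₂×p₁} such that c₁ = c₂ + G₂γ, G₁ = G₂Γ, ΠF₁ = F₂Γ, Πθ₁ = θ₂ − F₂γ, and |γ| + |Γ|·𝟏 ≤ 𝟏 (entrywise, where |Γ| is the entrywise absolute value and 𝟏 the all-ones vector). Then P₁ ⊆ P₂. -/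
open Matrix

/-- The constrained zonotope `⟨c, G, F, θ⟩`. -/
def czSet {d n p : ℕ} (c : Fin d → ℝ) (G : Matrix (Fin d) (Fin n) ℝ)
    (F : Matrix (Fin p) (Fin n) ℝ) (θ : Fin p → ℝ) : Set (Fin d → ℝ) :=
  {x | ∃ l : Fin n → ℝ, (∀ k, |l k| ≤ 1) ∧ F.mulVec l = θ ∧ x = c + G.mulVec l}

/-- sufficient conditions for inclusion between two constrained
zonotopes. -/
theorem cz_inclusion {d n₁ n₂ p₁ p₂ : ℕ}
    (c₁ : Fin d → ℝ) (G₁ : Matrix (Fin d) (Fin n₁) ℝ)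
    (F₁ : Matrix (Fin p₁) (Fin n₁) ℝ) (θ₁ : Fin p₁ → ℝ)
    (c₂ : Fin d → ℝ) (G₂ : Matrix (Fin d) (Fin n₂) ℝ)
    (F₂ : Matrix (Fin p₂) (Fin n₂) ℝ) (θ₂ : Fin p₂ → ℝ)
    (γ : Fin n₂ → ℝ) (Γ : Matrix (Fin n₂) (Fin n₁) ℝ)
    (Pmat : Matrix (Fin p₂) (Fin p₁) ℝ)
    (ha : c₁ = c₂ + G₂.mulVec γ)
    (hb : G₁ = G₂ * Γ)
    (hc : Pmat * F₁ = F₂ * Γ)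
    (hd : Pmat.mulVec θ₁ = θ₂ - F₂.mulVec γ)
    (he : ∀ i, |γ i| + ∑ j, |Γ i j| ≤ 1) :
    czSet c₁ G₁ F₁ θ₁ ⊆ czSet c₂ G₂ F₂ θ₂ := by
  rintro x ⟨l, hl, hF, hx⟩
  refine ⟨γ + Γ.mulVec l, ?_, ?_, ?_⟩
  · intro k
    calc |(γ + Γ.mulVec l) k| ≤ |γ k| + |Γ.mulVec l k| := abs_add_le _ _
      _ ≤ |γ k| + ∑ j, |Γ k j| := by
          gcongr
          calc |Γ.mulVec l k| ≤ ∑ j, |Γ k j * l j| := by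
                simp only [Matrix.mulVec, dotProduct]
                exact Finset.abs_sum_le_sum_abs _ _
            _ ≤ ∑ j, |Γ k j| := by
                apply Finset.sum_le_sum
                intro j _
                rw [abs_mul]
                exact mul_le_of_le_one_right (abs_nonneg _) (hl j)
      _ ≤ 1 := he k
  · rw [mulVec_add, mulVec_mulVec, ← hc, ← mulVec_mulVec, hF, hd]
    abel
  · rw [hx, ha, hb, mulVec_add, ← mulVec_mulVec]
    abel
end

section
/- Let Z₁ = {c₁ + G₁λ : ‖λ‖_∞ ≤ 1} and Z₂ = {c₂ + G₂λ : ‖λ‖_∞ ≤ 1} be zonotopes in ℝ^d. If there exist γ ∈ ℝ^{n₂} and Γ ∈ ℝ^{n₂×n₁} such that c₁ = c₂ + G₂γ, G₁ = G₂Γ, and for every row i, |γ(i)| + Σ_j |Γ(i,j)| ≤ 1, then Z₁ ⊆ Z₂. -/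
/-! The point `c₁ + G₁ λ` equals `c₂ + G₂ (γ + Γ λ)`, and the row condition on `(γ, Γ)` keeps every
coordinate of `γ + Γ λ` in `[-1, 1]` whenever `‖λ‖_∞ ≤ 1`. -/

open Matrix

/-- The zonotope `⟨c, G⟩`. -/
def zonoSet {d n : ℕ} (c : Fin d → ℝ) (G : Matrix (Fin d) (Fin n) ℝ) :
    Set (Fin d → ℝ) :=
  {x | ∃ l : Fin n → ℝ, (∀ k, |l k| ≤ 1) ∧ x = c + G.mulVec l}

section RowSum

variable {R m n : Type*} [Ring R] [LinearOrder R] [IsOrderedRing R] [Fintype n]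

theorem abs_mulVec_apply_le_sum_abs (A : Matrix m n R) {l : n → R} (hl : ∀ j, |l j| ≤ 1)
    (i : m) : |(A *ᵥ l) i| ≤ ∑ j, |A i j| :=
  calc |(A *ᵥ l) i| ≤ ∑ j, |A i j * l j| := Finset.abs_sum_le_sum_abs _ _
    _ ≤ ∑ j, |A i j| := Finset.sum_le_sum fun j _ => by
        rw [abs_mul]
        exact mul_le_of_le_one_right (abs_nonneg _) (hl j)

theorem abs_add_mulVec_apply_le_one (v : m → R) (A : Matrix m n R)
    (hrow : ∀ i, |v i| + ∑ j, |A i j| ≤ 1) {l : n → R} (hl : ∀ j, |l j| ≤ 1) (i : m) :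
    |(v + A *ᵥ l) i| ≤ 1 :=
  calc |(v + A *ᵥ l) i| ≤ |v i| + |(A *ᵥ l) i| := abs_add_le _ _
    _ ≤ |v i| + ∑ j, |A i j| := add_le_add_right (abs_mulVec_apply_le_sum_abs A hl i) _
    _ ≤ 1 := hrow i

end RowSum

/-- sufficient conditions for inclusion between two zonotopes. -/
theorem zonotope_inclusion {d n₁ n₂ : ℕ}
    (c₁ : Fin d → ℝ) (G₁ : Matrix (Fin d) (Fin n₁) ℝ)
    (c₂ : Fin d → ℝ) (G₂ : Matrix (Fin d) (Fin n₂) ℝ)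
    (γ : Fin n₂ → ℝ) (Γ : Matrix (Fin n₂) (Fin n₁) ℝ)
    (ha : c₁ = c₂ + G₂.mulVec γ)
    (hb : G₁ = G₂ * Γ)
    (he : ∀ i, |γ i| + ∑ j, |Γ i j| ≤ 1) :
    zonoSet c₁ G₁ ⊆ zonoSet c₂ G₂ := by
  rintro x ⟨l, hl, rfl⟩
  refine ⟨γ + Γ *ᵥ l, abs_add_mulVec_apply_le_one γ Γ he hl, ?_⟩
  rw [ha, hb, mulVec_add, ← mulVec_mulVec, add_assoc]
end
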